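/- arXiv:1509.01524 — 3 statements merged into one kernel-verified Lean document; each statement's English description precedes it below -/
import Mathlib

section
/- If 0 < τ² < 8/27, then the cubic equation 2ζ²(ζ+1) = τ² has exactly three distinct real solutions ζ₁ > 0 > ζ₂ > ζ₃ > −1. -/
theorem stmt_2 (τ : ℝ) (h1 : 0 < τ^2) (h2 : τ^2 < 8/27) :
    ∃ ζ₁ ζ₂ ζ₃ : ℝ,
      ζ₁ > 0 ∧ 0 > ζ₂ ∧ ζ₂ > ζ₃ ∧ ζ₃ > -1 ∧
      2 * ζ₁^2 * (ζ₁ + 1) = τ^2 ∧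
      2 * ζ₂^2 * (ζ₂ + 1) = τ^2 ∧
      2 * ζ₃^2 * (ζ₃ + 1) = τ^2 ∧
      ∀ ζ : ℝ, 2 * ζ^2 * (ζ + 1) = τ^2 → ζ = ζ₁ ∨ ζ = ζ₂ ∨ ζ = ζ₃ := by
  have hc : Continuous (fun x : ℝ => 2 * x^2 * (x + 1)) := by continuity
  -- root in (0,1)
  obtain ⟨ζ₁, hm1, h₁⟩ : ∃ x ∈ Set.Ioo (0:ℝ) 1, 2 * x^2 * (x+1) = τ^2 := by
    have hsub := intermediate_value_Ioo (by norm_num : (0:ℝ) ≤ 1) hc.continuousOn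
    have ht : τ^2 ∈ Set.Ioo ((fun x : ℝ => 2 * x^2 * (x + 1)) 0)
        ((fun x : ℝ => 2 * x^2 * (x + 1)) 1) := by
      constructor <;> simp <;> nlinarith
    obtain ⟨x, hx, hfx⟩ := hsub ht
    exact ⟨x, hx, hfx⟩
  -- root in (-2/3, 0)
  obtain ⟨ζ₂, hm2, h₂⟩ : ∃ x ∈ Set.Ioo (-2/3 : ℝ) 0, 2 * x^2 * (x+1) = τ^2 := by
    have hsub := intermediate_value_Ioo' (by norm_num : (-2/3:ℝ) ≤ 0) hc.continuousOn
    have ht : τ^2 ∈ Set.Ioo ((fun x : ℝ => 2 * x^2 * (x + 1)) 0)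
        ((fun x : ℝ => 2 * x^2 * (x + 1)) (-2/3)) := by
      constructor <;> simp <;> nlinarith
    obtain ⟨x, hx, hfx⟩ := hsub ht
    exact ⟨x, hx, hfx⟩
  -- root in (-1, -2/3)
  obtain ⟨ζ₃, hm3, h₃⟩ : ∃ x ∈ Set.Ioo (-1 : ℝ) (-2/3), 2 * x^2 * (x+1) = τ^2 := by
    have hsub := intermediate_value_Ioo (by norm_num : (-1:ℝ) ≤ -2/3) hc.continuousOn
    have ht : τ^2 ∈ Set.Ioo ((fun x : ℝ => 2 * x^2 * (x + 1)) (-1))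
        ((fun x : ℝ => 2 * x^2 * (x + 1)) (-2/3)) := by
      constructor <;> simp <;> nlinarith
    obtain ⟨x, hx, hfx⟩ := hsub ht
    exact ⟨x, hx, hfx⟩
  obtain ⟨hp1, hl1⟩ := hm1
  obtain ⟨hl2, hn2⟩ := hm2
  obtain ⟨hl3, hn3⟩ := hm3
  have h12 : ζ₁ ≠ ζ₂ := by linarith
  have h13 : ζ₁ ≠ ζ₃ := by linarith
  have h23 : ζ₂ ≠ ζ₃ := by linarith
  -- Vieta relations
  have p12 : ζ₁^2 + ζ₁*ζ₂ + ζ₂^2 + ζ₁ + ζ₂ = 0 := by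
    have hne : ζ₁ - ζ₂ ≠ 0 := sub_ne_zero.mpr h12
    have : (ζ₁ - ζ₂) * (ζ₁^2 + ζ₁*ζ₂ + ζ₂^2 + ζ₁ + ζ₂) = 0 := by
      have := h₁.trans h₂.symm; nlinarith [this]
    exact (mul_eq_zero.mp this).resolve_left hne
  have p13 : ζ₁^2 + ζ₁*ζ₃ + ζ₃^2 + ζ₁ + ζ₃ = 0 := by
    have hne : ζ₁ - ζ₃ ≠ 0 := sub_ne_zero.mpr h13
    have : (ζ₁ - ζ₃) * (ζ₁^2 + ζ₁*ζ₃ + ζ₃^2 + ζ₁ + ζ₃) = 0 := by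
      have := h₁.trans h₃.symm; nlinarith [this]
    exact (mul_eq_zero.mp this).resolve_left hne
  have s1 : ζ₁ + ζ₂ + ζ₃ = -1 := by
    have hne : ζ₂ - ζ₃ ≠ 0 := sub_ne_zero.mpr h23
    have : (ζ₂ - ζ₃) * (ζ₁ + ζ₂ + ζ₃ + 1) = 0 := by linear_combination p12 - p13
    have := (mul_eq_zero.mp this).resolve_left hne
    linarith
  have s2 : ζ₁*ζ₂ + ζ₁*ζ₃ + ζ₂*ζ₃ = 0 := by
    linear_combination (-(1:ℝ)) * p12 + (ζ₁ + ζ₂) * s1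
  have s3 : ζ₁*ζ₂*ζ₃ = τ^2 / 2 := by
    linear_combination h₁/2 + ζ₁ * s2 - ζ₁^2 * s1
  refine ⟨ζ₁, ζ₂, ζ₃, hp1, hn2, by linarith, hl3, h₁, h₂, h₃, ?_⟩
  intro ζ hζ
  have key : (ζ - ζ₁) * ((ζ - ζ₂) * (ζ - ζ₃)) = 0 := by
    linear_combination hζ/2 - ζ^2 * s1 + ζ * s2 - s3
  rcases mul_eq_zero.mp key with h | h
  · left; linarith [sub_eq_zero.mp h]
  · rcases mul_eq_zero.mp h with h' | h'
    · right; left; linarith [sub_eq_zero.mp h']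
    · right; right; linarith [sub_eq_zero.mp h']
end

section
/- Let c₁, c₂ > 0 and η = 2c₂·√(exp(−3 − c₁/c₂)). If τ > η, then the equation ζ²·exp((ζ − c₁)/c₂ − 1) = τ² has exactly one real solution, and it is positive. -/
theorem stmt_10 (c₁ c₂ τ : ℝ) (hc₁ : 0 < c₁) (hc₂ : 0 < c₂)
    (η : ℝ) (hη : η = 2 * c₂ * Real.sqrt (Real.exp (-3 - c₁ / c₂)))
    (hτ : τ > η) :
    ∃ ζ : ℝ, 0 < ζ ∧ ζ^2 * Real.exp ((ζ - c₁) / c₂ - 1) = τ^2 ∧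
      ∀ ζ' : ℝ, ζ'^2 * Real.exp ((ζ' - c₁) / c₂ - 1) = τ^2 → ζ' = ζ := by
  have hη0 : 0 < η := by
    rw [hη]
    have := Real.sqrt_pos.mpr (Real.exp_pos (-3 - c₁ / c₂))
    positivity
  have hτ0 : 0 < τ := lt_trans hη0 hτ
  have hη2 : η^2 = 4 * c₂^2 * Real.exp (-3 - c₁/c₂) := by
    rw [hη, mul_pow, mul_pow, Real.sq_sqrt (Real.exp_pos _).le]; ring
  have hτ2 : 4 * c₂^2 * Real.exp (-3 - c₁/c₂) < τ^2 := by
    rw [← hη2]; nlinarith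
  set f : ℝ → ℝ := fun ζ => ζ^2 * Real.exp ((ζ - c₁)/c₂ - 1) with hf
  -- strict monotonicity on [0, ∞)
  have hmono : StrictMonoOn f (Set.Ici 0) := by
    intro a ha b hb hab
    simp only [hf]
    have ha0 : (0:ℝ) ≤ a := ha
    have h1 : Real.exp ((a - c₁)/c₂ - 1) ≤ Real.exp ((b - c₁)/c₂ - 1) := by
      apply Real.exp_le_exp.mpr
      have : a ≤ b := hab.le
      gcongr
    have hab2 : a^2 < b^2 := by nlinarith
    calc a^2 * Real.exp ((a - c₁)/c₂ - 1)
        < b^2 * Real.exp ((a - c₁)/c₂ - 1) :=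
          mul_lt_mul_of_pos_right hab2 (Real.exp_pos _)
      _ ≤ b^2 * Real.exp ((b - c₁)/c₂ - 1) :=
          mul_le_mul_of_nonneg_left h1 (sq_nonneg b)
  -- bound on (-∞, 0]
  have hneg : ∀ x ≤ 0, f x ≤ 4 * c₂^2 * Real.exp (-3 - c₁/c₂) := by
    intro x hx
    have hE : Real.exp ((x - c₁)/c₂ - 1)
        = Real.exp (x/(2*c₂)) ^ 2 * Real.exp (-c₁/c₂ - 1) := by
      rw [sq, ← Real.exp_add, ← Real.exp_add]
      congr 1
      field_simp
      ring
    have hR : 4 * c₂^2 * Real.exp (-3 - c₁/c₂)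
        = (2 * c₂ * Real.exp (-1))^2 * Real.exp (-c₁/c₂ - 1) := by
      have h5 : Real.exp (-3 - c₁/c₂)
          = Real.exp (-1) * Real.exp (-1) * Real.exp (-c₁/c₂ - 1) := by
        rw [← Real.exp_add, ← Real.exp_add]; ring_nf
      rw [h5]; ring
    set u := -x/(2*c₂) with hu
    have hu0 : 0 ≤ u := div_nonneg (neg_nonneg.mpr hx) (by positivity)
    have h2 : u ≤ Real.exp (u - 1) := by linarith [Real.add_one_le_exp (u-1)]
    have h1 : u * Real.exp (-u) ≤ Real.exp (-1) := by
      calc u * Real.exp (-u) ≤ Real.exp (u-1) * Real.exp (-u) :=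
            mul_le_mul_of_nonneg_right h2 (Real.exp_pos _).le
        _ = Real.exp (-1) := by rw [← Real.exp_add]; ring_nf
    have hexpu : Real.exp (-u) = Real.exp (x/(2*c₂)) := by rw [hu]; ring_nf
    have hxE : -x * Real.exp (x/(2*c₂)) ≤ 2*c₂ * Real.exp (-1) := by
      have h3 : 2*c₂ * (u * Real.exp (-u)) ≤ 2*c₂ * Real.exp (-1) := by
        apply mul_le_mul_of_nonneg_left h1 (by positivity)
      have h4 : 2*c₂ * (u * Real.exp (-u)) = -x * Real.exp (x/(2*c₂)) := by
        rw [hexpu, hu]; field_simp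
      linarith [h4 ▸ h3]
    have hxE0 : 0 ≤ -x * Real.exp (x/(2*c₂)) :=
      mul_nonneg (neg_nonneg.mpr hx) (Real.exp_pos _).le
    have hsq : (-x * Real.exp (x/(2*c₂)))^2 ≤ (2*c₂ * Real.exp (-1))^2 := by
      apply pow_le_pow_left₀ hxE0 hxE
    simp only [hf, hE, hR]
    have hexpc : 0 < Real.exp (-c₁/c₂ - 1) := Real.exp_pos _
    nlinarith [hsq, hexpc]
  -- existence via IVT
  set M := c₁ + c₂ + τ with hM
  have hM0 : (0:ℝ) ≤ M := by positivity
  have hfM : τ^2 ≤ f M := by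
    simp only [hf]
    have h1 : (1:ℝ) ≤ Real.exp ((M - c₁)/c₂ - 1) := by
      rw [Real.one_le_exp_iff]
      rw [hM]
      have : (c₁ + c₂ + τ - c₁)/c₂ = 1 + τ/c₂ := by field_simp; ring
      rw [this]
      have : 0 ≤ τ/c₂ := by positivity
      linarith
    have h2 : τ^2 ≤ M^2 := by nlinarith
    nlinarith [Real.exp_pos ((M - c₁)/c₂ - 1), sq_nonneg M]
  have hf0 : f 0 = 0 := by simp [hf]
  have hcont : ContinuousOn f (Set.Icc 0 M) := by
    apply Continuous.continuousOn
    fun_prop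
  have hmem : τ^2 ∈ Set.Icc (f 0) (f M) := by
    constructor
    · rw [hf0]; positivity
    · exact hfM
  obtain ⟨ζ, hζmem, hζeq⟩ := intermediate_value_Icc hM0 hcont hmem
  have hζ0 : 0 < ζ := by
    rcases lt_or_eq_of_le hζmem.1 with h | h
    · exact h
    · exfalso; rw [← h] at hζeq; rw [hf0] at hζeq; nlinarith
  refine ⟨ζ, hζ0, hζeq, ?_⟩
  intro ζ' hζ'
  have hζ'0 : 0 < ζ' := by
    by_contra h
    push_neg at h
    have := hneg ζ' h
    rw [show f ζ' = ζ'^2 * Real.exp ((ζ' - c₁)/c₂ - 1) from rfl, hζ'] at this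
    linarith
  exact hmono.injOn (Set.mem_Ici.mpr hζ'0.le) (Set.mem_Ici.mpr hζ0.le)
    (by rw [show f ζ' = ζ'^2 * Real.exp ((ζ' - c₁)/c₂ - 1) from rfl, hζ', hζeq])
end

section
/- Let c₁, c₂ > 0 and η = 2c₂·√(exp(−3 − c₁/c₂)). If 0 < τ < η, then the equation ζ²·exp((ζ − c₁)/c₂ − 1) = τ² has exactly three real solutions ζ₁ > 0 > ζ₂ > −2c₂ > ζ₃. -/
/-! Rescaling `x = ζ / c₂` turns the equation into `x² eˣ = t` with
`t = τ² / (c₂² e^(-c₁/c₂ - 1))`, and `τ < η` becomes `t < 4 e⁻²`.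
The function `x ↦ x² eˣ` has derivative `x (x + 2) eˣ`: it increases from `0` (at `-∞`) to
its local maximum `4 e⁻²` at `-2`, decreases to `0` at `0`, then increases to `+∞`.
For `0 < t < 4 e⁻²` the intermediate value theorem gives one root on each of the three
monotonicity intervals, and strict monotonicity makes each of them unique. -/

open Real Set Filter Topology

lemma hasDerivAt_sq_mul_exp (x : ℝ) :
    HasDerivAt (fun x : ℝ => x ^ 2 * exp x) (x * (x + 2) * exp x) x := by
  have h : HasDerivAt (fun x : ℝ => x ^ 2 * exp x) _ x :=
    (hasDerivAt_pow 2 x).mul (hasDerivAt_exp x)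
  convert h using 1
  ring

lemma continuous_sq_mul_exp : Continuous fun x : ℝ => x ^ 2 * exp x := by
  fun_prop

lemma strictMonoOn_sq_mul_exp_Ici : StrictMonoOn (fun x : ℝ => x ^ 2 * exp x) (Ici 0) := by
  refine strictMonoOn_of_deriv_pos (convex_Ici 0) continuous_sq_mul_exp.continuousOn
    fun x hx => ?_
  rw [interior_Ici, mem_Ioi] at hx
  rw [(hasDerivAt_sq_mul_exp x).deriv]
  positivity

lemma strictAntiOn_sq_mul_exp_Icc : StrictAntiOn (fun x : ℝ => x ^ 2 * exp x) (Icc (-2) 0) := by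
  refine strictAntiOn_of_deriv_neg (convex_Icc _ _) continuous_sq_mul_exp.continuousOn
    fun x hx => ?_
  rw [interior_Icc] at hx
  rw [(hasDerivAt_sq_mul_exp x).deriv]
  exact mul_neg_of_neg_of_pos (mul_neg_of_neg_of_pos hx.2 (by linarith [hx.1])) (exp_pos x)

lemma strictMonoOn_sq_mul_exp_Iic : StrictMonoOn (fun x : ℝ => x ^ 2 * exp x) (Iic (-2)) := by
  refine strictMonoOn_of_deriv_pos (convex_Iic _) continuous_sq_mul_exp.continuousOn
    fun x hx => ?_
  rw [interior_Iic, mem_Iio] at hx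
  rw [(hasDerivAt_sq_mul_exp x).deriv]
  exact mul_pos (mul_pos_of_neg_of_neg (by linarith) (by linarith)) (exp_pos x)

lemma tendsto_sq_mul_exp_atTop : Tendsto (fun x : ℝ => x ^ 2 * exp x) atTop atTop :=
  (tendsto_pow_atTop two_ne_zero).atTop_mul_atTop₀ tendsto_exp_atTop

lemma tendsto_sq_mul_exp_atBot : Tendsto (fun x : ℝ => x ^ 2 * exp x) atBot (𝓝 0) := by
  convert (tendsto_pow_mul_exp_neg_atTop_nhds_zero 2).comp tendsto_neg_atBot_atTop using 2
  simp

lemma exists_pos_sq_mul_exp_eq {t : ℝ} (ht : 0 < t) : ∃ x, 0 < x ∧ x ^ 2 * exp x = t :=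
  intermediate_value_Ioi continuous_sq_mul_exp.continuousOn tendsto_sq_mul_exp_atTop
    (by simpa using ht)

lemma exists_mem_Ioo_sq_mul_exp_eq {t : ℝ} (ht₀ : 0 < t) (ht : t < 4 * exp (-2)) :
    ∃ x ∈ Ioo (-2) 0, x ^ 2 * exp x = t :=
  intermediate_value_Ioo' (by norm_num) continuous_sq_mul_exp.continuousOn
    ⟨by simpa using ht₀, by norm_num [ht]⟩

lemma exists_lt_neg_two_sq_mul_exp_eq {t : ℝ} (ht₀ : 0 < t) (ht : t < 4 * exp (-2)) :
    ∃ x < -2, x ^ 2 * exp x = t := by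
  have hleft : Tendsto (fun x : ℝ => x ^ 2 * exp x) (𝓝[<] (-2)) (𝓝 (4 * exp (-2))) := by
    convert continuous_sq_mul_exp.continuousWithinAt.tendsto using 2
    norm_num
  exact isPreconnected_Iio.intermediate_value_Ioo (l₂ := 𝓝[<] (-2))
    (le_principal_iff.2 (Iio_mem_atBot _)) inf_le_right continuous_sq_mul_exp.continuousOn
    tendsto_sq_mul_exp_atBot hleft ⟨ht₀, ht⟩

theorem exists_three_sq_mul_exp_eq {t : ℝ} (ht₀ : 0 < t) (ht : t < 4 * exp (-2)) :
    ∃ x₁ x₂ x₃ : ℝ, 0 < x₁ ∧ x₂ < 0 ∧ -2 < x₂ ∧ x₃ < -2 ∧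
      x₁ ^ 2 * exp x₁ = t ∧ x₂ ^ 2 * exp x₂ = t ∧ x₃ ^ 2 * exp x₃ = t ∧
      ∀ x, x ^ 2 * exp x = t → x = x₁ ∨ x = x₂ ∨ x = x₃ := by
  obtain ⟨x₁, hx₁, e₁⟩ := exists_pos_sq_mul_exp_eq ht₀
  obtain ⟨x₂, ⟨hx₂l, hx₂r⟩, e₂⟩ := exists_mem_Ioo_sq_mul_exp_eq ht₀ ht
  obtain ⟨x₃, hx₃, e₃⟩ := exists_lt_neg_two_sq_mul_exp_eq ht₀ ht
  refine ⟨x₁, x₂, x₃, hx₁, hx₂r, hx₂l, hx₃, e₁, e₂, e₃, fun x hx => ?_⟩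
  rcases le_or_gt 0 x with h0 | h0
  · exact .inl <| strictMonoOn_sq_mul_exp_Ici.injOn h0 hx₁.le (hx.trans e₁.symm)
  rcases le_or_gt (-2) x with h2 | h2
  · exact .inr <| .inl <|
      strictAntiOn_sq_mul_exp_Icc.injOn ⟨h2, h0.le⟩ ⟨hx₂l.le, hx₂r.le⟩ (hx.trans e₂.symm)
  · exact .inr <| .inr <| strictMonoOn_sq_mul_exp_Iic.injOn h2.le hx₃.le (hx.trans e₃.symm)

lemma sq_mul_exp_div_sub_one (c₁ : ℝ) {c₂ : ℝ} (hc₂ : c₂ ≠ 0) (ζ : ℝ) :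
    ζ ^ 2 * exp ((ζ - c₁) / c₂ - 1) =
      c₂ ^ 2 * exp (-c₁ / c₂ - 1) * ((ζ / c₂) ^ 2 * exp (ζ / c₂)) := by
  rw [show (ζ - c₁) / c₂ - 1 = ζ / c₂ + (-c₁ / c₂ - 1) by ring, exp_add]
  field_simp

theorem stmt_11_general (c₁ c₂ τ : ℝ) (hc₂ : 0 < c₂)
    (η : ℝ) (hη : η = 2 * c₂ * Real.sqrt (Real.exp (-3 - c₁ / c₂)))
    (hτ0 : 0 < τ) (hτη : τ < η) :
    ∃ ζ₁ ζ₂ ζ₃ : ℝ,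
      ζ₁ > 0 ∧ 0 > ζ₂ ∧ ζ₂ > -2 * c₂ ∧ -2 * c₂ > ζ₃ ∧
      ζ₁^2 * Real.exp ((ζ₁ - c₁) / c₂ - 1) = τ^2 ∧
      ζ₂^2 * Real.exp ((ζ₂ - c₁) / c₂ - 1) = τ^2 ∧
      ζ₃^2 * Real.exp ((ζ₃ - c₁) / c₂ - 1) = τ^2 ∧
      ∀ ζ : ℝ, ζ^2 * Real.exp ((ζ - c₁) / c₂ - 1) = τ^2 → ζ = ζ₁ ∨ ζ = ζ₂ ∨ ζ = ζ₃ := by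
  set K := c₂ ^ 2 * exp (-c₁ / c₂ - 1)
  have hK : 0 < K := by positivity
  have hroot (ζ : ℝ) :
      ζ ^ 2 * exp ((ζ - c₁) / c₂ - 1) = τ ^ 2 ↔ (ζ / c₂) ^ 2 * exp (ζ / c₂) = τ ^ 2 / K := by
    rw [sq_mul_exp_div_sub_one c₁ hc₂.ne', eq_div_iff hK.ne', mul_comm]
  have hη_sq : η ^ 2 = 4 * exp (-2) * K := by
    rw [hη, mul_pow, mul_pow, sq_sqrt (exp_nonneg _),
      show -3 - c₁ / c₂ = -2 + (-c₁ / c₂ - 1) by ring, exp_add]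
    ring
  have ht : τ ^ 2 / K < 4 * exp (-2) := by
    rw [div_lt_iff₀ hK, ← hη_sq]
    exact pow_lt_pow_left₀ hτη hτ0.le two_ne_zero
  obtain ⟨x₁, x₂, x₃, hx₁, hx₂r, hx₂l, hx₃, e₁, e₂, e₃, huniq⟩ :=
    exists_three_sq_mul_exp_eq (by positivity) ht
  have hscaled {x : ℝ} (e : x ^ 2 * exp x = τ ^ 2 / K) :
      (c₂ * x) ^ 2 * exp ((c₂ * x - c₁) / c₂ - 1) = τ ^ 2 := by
    rwa [hroot, mul_div_cancel_left₀ _ hc₂.ne']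
  refine ⟨c₂ * x₁, c₂ * x₂, c₂ * x₃, by positivity, mul_neg_of_pos_of_neg hc₂ hx₂r,
    by nlinarith, by nlinarith, hscaled e₁, hscaled e₂, hscaled e₃, fun ζ hζ => ?_⟩
  have hζ_eq : ζ = c₂ * (ζ / c₂) := (mul_div_cancel₀ ζ hc₂.ne').symm
  rcases huniq _ ((hroot ζ).1 hζ) with h | h | h <;> rw [hζ_eq, h] <;> simp

theorem stmt_11 (c₁ c₂ τ : ℝ) (hc₁ : 0 < c₁) (hc₂ : 0 < c₂)
    (η : ℝ) (hη : η = 2 * c₂ * Real.sqrt (Real.exp (-3 - c₁ / c₂)))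
    (hτ0 : 0 < τ) (hτη : τ < η) :
    ∃ ζ₁ ζ₂ ζ₃ : ℝ,
      ζ₁ > 0 ∧ 0 > ζ₂ ∧ ζ₂ > -2 * c₂ ∧ -2 * c₂ > ζ₃ ∧
      ζ₁^2 * Real.exp ((ζ₁ - c₁) / c₂ - 1) = τ^2 ∧
      ζ₂^2 * Real.exp ((ζ₂ - c₁) / c₂ - 1) = τ^2 ∧
      ζ₃^2 * Real.exp ((ζ₃ - c₁) / c₂ - 1) = τ^2 ∧
      ∀ ζ : ℝ, ζ^2 * Real.exp ((ζ - c₁) / c₂ - 1) = τ^2 → ζ = ζ₁ ∨ ζ = ζ₂ ∨ ζ = ζ₃ :=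
  stmt_11_general c₁ c₂ τ hc₂ η hη hτ0 hτη
end
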